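/- arXiv:0710.3722 — 8 statements merged into one kernel-verified Lean document; each statement's English description precedes it below -/
import Mathlib

section
/- Let Y be a topological space with an equivalence relation ~Y whose classes are path-connected. Let Y^I_S denote the space of continuous paths ω : [0,1] → Y whose image is contained in a single equivalence class, with the compact-open topology, and with the relation ω ~ ω' iff ω(0) ~Y ω'(0). Then the evaluation map p₁ : Y^I_S → Y, ω ↦ ω(1), is a stratified map having the stratified homotopy lifting property with respect to all stratified spaces. -/
open unitInterval

/-- A stratified map: continuous and compatible with the equivalence relations. -/
def IsStratMap {X Y : Type} [TopologicalSpace X] [TopologicalSpace Y]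
    (rX : X → X → Prop) (rY : Y → Y → Prop) (f : X → Y) : Prop :=
  Continuous f ∧ ∀ x x' : X, rX x x' → rY (f x) (f x')

/-- A stratified homotopy: `X × I` carries the product relation with `I` trivially
stratified, i.e. `(x,t) ∼ (x',t') ↔ x ∼ x'`. -/
def IsStratHomotopy {X Y : Type} [TopologicalSpace X] [TopologicalSpace Y]
    (rX : X → X → Prop) (rY : Y → Y → Prop) (H : X × I → Y) : Prop :=
  Continuous H ∧ ∀ (x x' : X) (t t' : I), rX x x' → rY (H (x, t)) (H (x', t'))

/-- Two maps are `S`-homotopic if a stratified homotopy joins them. -/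
def SHomotopic {X Y : Type} [TopologicalSpace X] [TopologicalSpace Y]
    (rX : X → X → Prop) (rY : Y → Y → Prop) (f g : X → Y) : Prop :=
  ∃ H : X × I → Y, IsStratHomotopy rX rY H ∧ (∀ x, H (x, 0) = f x) ∧ (∀ x, H (x, 1) = g x)

/-- A stratified weak equivalence: a stratified map with a two-sided inverse up to
stratified homotopy. -/
def IsStratWeakEquiv {X Y : Type} [TopologicalSpace X] [TopologicalSpace Y]
    (rX : X → X → Prop) (rY : Y → Y → Prop) (f : X → Y) : Prop :=
  IsStratMap rX rY f ∧ ∃ g : Y → X, IsStratMap rY rX g ∧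
    SHomotopic rY rY (f ∘ g) id ∧ SHomotopic rX rX (g ∘ f) id

/-- The stratified homotopy lifting property with respect to all stratified spaces
(topological spaces with an equivalence relation with path-connected classes). -/
def HasSHLP {E B : Type} [TopologicalSpace E] [TopologicalSpace B]
    (rE : E → E → Prop) (rB : B → B → Prop) (p : E → B) : Prop :=
  ∀ (Z : Type) (_ : TopologicalSpace Z) (rZ : Z → Z → Prop), Equivalence rZ →
    (∀ z : Z, IsPathConnected {z' | rZ z z'}) →
    ∀ h : Z → E, IsStratMap rZ rE h →
    ∀ H : Z × I → B, IsStratHomotopy rZ rB H →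
    (∀ z, H (z, 0) = p (h z)) →
    ∃ H' : Z × I → E, IsStratHomotopy rZ rE H' ∧
      (∀ z t, p (H' (z, t)) = H (z, t)) ∧ (∀ z, H' (z, 0) = h z)

/-- A stratified fibration. -/
def IsStratFibration {E B : Type} [TopologicalSpace E] [TopologicalSpace B]
    (rE : E → E → Prop) (rB : B → B → Prop) (p : E → B) : Prop :=
  IsStratMap rE rB p ∧ HasSHLP rE rB p

/-- The stratified path space `Y^I_S`: continuous paths contained in a single stratum,
with the compact-open topology. -/
abbrev SPath (Y : Type) [TopologicalSpace Y] (rY : Y → Y → Prop) : Type :=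
  {ω : C(I, Y) // ∀ t t' : I, rY (ω t) (ω t')}

/-- The stratification of the path space: two paths are equivalent iff they lie in the
same stratum. -/
def SPathRel {Y : Type} [TopologicalSpace Y] (rY : Y → Y → Prop)
    (ω ω' : SPath Y rY) : Prop :=
  rY (ω.1 0) (ω'.1 0)

/-- The stratification induced on a subset `U`: strata are the connected components of
the intersections of `U` with the strata of `X`. -/
def relInduced {X : Type} [TopologicalSpace X] (rX : X → X → Prop) (U : Set X)
    (x x' : U) : Prop :=
  (x' : X) ∈ connectedComponentIn {y | y ∈ U ∧ rX (x : X) y} (x : X)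

/-- A subset `U` is `A`-categorical: there is a stratified homotopy (for the induced
stratification on `U`) from the inclusion of `U` to a map with values in `A`. -/
def ACat {X : Type} [TopologicalSpace X] (rX : X → X → Prop) (A U : Set X) : Prop :=
  ∃ H : U × I → X, IsStratHomotopy (relInduced rX U) rX H ∧
    (∀ x : U, H (x, 0) = x) ∧ (∀ x : U, H (x, 1) ∈ A)

/-- `X` is covered by `n+1` open `A`-categorical sets. -/
def OcatLe {X : Type} [TopologicalSpace X] (rX : X → X → Prop) (A : Set X) (n : ℕ) : Prop :=
  ∃ U : Fin (n + 1) → Set X, (∀ i, IsOpen (U i)) ∧ (∀ x, ∃ i, x ∈ U i) ∧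
    ∀ i, ACat rX A (U i)

/-- The open LS-category `Ocat(X, A, F_X)` of a stratified pair, as an extended natural
number (`⊤` if no finite categorical cover exists). -/
noncomputable def Ocat {X : Type} [TopologicalSpace X] (rX : X → X → Prop) (A : Set X) : ℕ∞ :=
  sInf {c : ℕ∞ | ∃ n : ℕ, c = (n : ℕ∞) ∧ OcatLe rX A n}

/-- The `n`-th fat wedge of the pair `(X, A)`. -/
def FatWedge {X : Type} (A : Set X) (n : ℕ) : Set (Fin (n + 1) → X) :=
  {x | ∃ k, x k ∈ A}

/-- The product stratification on `X^{n+1}`. -/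
def relPi {X : Type} (rX : X → X → Prop) {n : ℕ} (x y : Fin (n + 1) → X) : Prop :=
  ∀ i, rX (x i) (y i)

/-- The diagonal factors up to stratified homotopy through the `n`-th fat wedge. -/
def WhcatLe {X : Type} [TopologicalSpace X] (rX : X → X → Prop) (A : Set X) (n : ℕ) : Prop :=
  ∃ r : X → (Fin (n + 1) → X), IsStratMap rX (relPi rX) r ∧
    (∀ x, r x ∈ FatWedge A n) ∧ SHomotopic rX (relPi rX) (fun x _ => x) r

/-- The Whitehead LS-category of a stratified pair. -/
noncomputable def Whcat {X : Type} [TopologicalSpace X] (rX : X → X → Prop) (A : Set X) : ℕ∞ :=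
  sInf {c : ℕ∞ | ∃ n : ℕ, c = (n : ℕ∞) ∧ WhcatLe rX A n}

/-- The `n`-th Ganea space of the pair `(X, A)`: `(n+1)`-tuples of stratified paths with a
common endpoint, one of which starts in `A`. -/
def GaneaSet {X : Type} [TopologicalSpace X] (rX : X → X → Prop) (A : Set X) (n : ℕ) :
    Set (Fin (n + 1) → SPath X rX) :=
  {α | (∀ i, (α i).1 1 = (α 0).1 1) ∧ ∃ k, (α k).1 0 ∈ A}

/-- The stratification on the Ganea space, induced by the product of path-space
stratifications. -/
def relGanea {X : Type} [TopologicalSpace X] (rX : X → X → Prop) (A : Set X) (n : ℕ)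
    (α β : GaneaSet rX A n) : Prop :=
  ∀ i, rX ((α.1 i).1 0) ((β.1 i).1 0)

/-- The `n`-th Ganea fibration `G_n(X,A,F_X) → X`. -/
def ganeaMap {X : Type} [TopologicalSpace X] (rX : X → X → Prop) (A : Set X) (n : ℕ)
    (α : GaneaSet rX A n) : X := (α.1 0).1 1

/-- The `n`-th Ganea fibration admits a stratified section. -/
def GcatLe {X : Type} [TopologicalSpace X] (rX : X → X → Prop) (A : Set X) (n : ℕ) : Prop :=
  ∃ s : X → GaneaSet rX A n, IsStratMap rX (relGanea rX A n) s ∧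
    ∀ x, ganeaMap rX A n (s x) = x

/-- The Ganea LS-category of a stratified pair. -/
noncomputable def Gcat {X : Type} [TopologicalSpace X] (rX : X → X → Prop) (A : Set X) : ℕ∞ :=
  sInf {c : ℕ∞ | ∃ n : ℕ, c = (n : ℕ∞) ∧ GcatLe rX A n}

/-!
Lifting a homotopy `H` starting at `p₁ ∘ h` amounts to prolonging each path `h z` by the track
`H (z, ·)` of its endpoint. Run through `h z` at speed `1 + t` and then through `H (z, ·)` on
`[0, t]`; at `t = 0` this is `h z` itself. The prolonged path stays in one stratum because
`H (z, ·)` lies in the stratum of `H (z, 0) = h z 1`, and it starts at `h z 0`, so the lift is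
stratified exactly when `h` is.
-/

open Set

section StretchTrans

variable {Y : Type}

noncomputable def stretchTrans (γ δ : I → Y) (t s : I) : Y :=
  if (1 + t : ℝ) * s ≤ 1 then IccExtend zero_le_one γ ((1 + t) * s)
  else IccExtend zero_le_one δ ((1 + t) * s - 1)

theorem stretchTrans_apply_zero (γ δ : I → Y) (t : I) : stretchTrans γ δ t 0 = γ 0 := by
  simp [stretchTrans]

theorem stretchTrans_apply_one {γ δ : I → Y} (hγδ : γ 1 = δ 0) (t : I) :
    stretchTrans γ δ t 1 = δ t := by
  rcases eq_or_ne t 0 with rfl | ht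
  · simpa [stretchTrans] using hγδ
  · have : ¬ (1 + t : ℝ) * (1 : I) ≤ 1 := by
      simpa using unitInterval.pos_iff_ne_zero.mpr ht
    rw [stretchTrans, if_neg this, Icc.coe_one, mul_one, add_sub_cancel_left, IccExtend_val]

theorem stretchTrans_zero (γ δ : I → Y) : stretchTrans γ δ 0 = γ := by
  funext s
  simp [stretchTrans, s.2.2]

theorem stretchTrans_mem_range (γ δ : I → Y) (t s : I) :
    stretchTrans γ δ t s ∈ range γ ∪ range δ := by
  unfold stretchTrans
  split_ifs
  · exact Or.inl (IccExtend_range _ γ ▸ mem_range_self _)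
  · exact Or.inr (IccExtend_range _ δ ▸ mem_range_self _)

theorem continuous_stretchTrans [TopologicalSpace Y] {W : Type} [TopologicalSpace W]
    {γ δ : W → I → Y} {t : W → I} (hγ : Continuous ↿γ) (hδ : Continuous ↿δ) (ht : Continuous t)
    (hγδ : ∀ w, γ w 1 = δ w 0) :
    Continuous fun p : W × I => stretchTrans (γ p.1) (δ p.1) (t p.1) p.2 := by
  have hu : Continuous fun p : W × I => (1 + (t p.1 : ℝ)) * p.2 := by fun_prop
  refine Continuous.if_le ?_ ?_ hu continuous_const fun p hp => ?_
  · exact Continuous.IccExtend (f := fun p : W × I => γ p.1)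
      (hγ.comp (continuous_fst.prodMap continuous_id)) hu
  · exact Continuous.IccExtend (f := fun p : W × I => δ p.1)
      (hδ.comp (continuous_fst.prodMap continuous_id)) (hu.sub continuous_const)
  · rw [hp, sub_self, IccExtend_right, IccExtend_left]
    exact hγδ p.1

end StretchTrans

section StratifiedPathSpace

variable {Y : Type} [TopologicalSpace Y] {rY : Y → Y → Prop}

theorem isStratMap_sPath_eval_one (hY : Equivalence rY) :
    IsStratMap (SPathRel rY) rY (fun ω : SPath Y rY => ω.1 1) :=
  ⟨(continuous_eval_const 1).comp continuous_subtype_val,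
    fun ω ω' hωω' => hY.trans (hY.trans (ω.2 1 0) hωω') (ω'.2 0 1)⟩

theorem hasSHLP_sPath_eval_one (hY : Equivalence rY) :
    HasSHLP (SPathRel rY) rY (fun ω : SPath Y rY => ω.1 1) := by
  intro Z _ rZ hZ _ h ⟨hh_cont, hh_rel⟩ H ⟨hH_cont, hH_rel⟩ hH0
  have hγδ : ∀ z, (h z).1 1 = H (z, 0) := fun z => (hH0 z).symm
  set L : (Z × I) × I → Y := fun p => stretchTrans (h p.1.1).1 (fun u => H (p.1.1, u)) p.1.2 p.2
  have hL : Continuous L :=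
    continuous_stretchTrans (γ := fun p : Z × I => (h p.1).1) (δ := fun p u => H (p.1, u))
      (by fun_prop) (by fun_prop) continuous_snd fun p => hγδ p.1
  have hL_stratum : ∀ z t s, rY (H (z, 0)) (L ((z, t), s)) := fun z t s => by
    change rY _ (stretchTrans (h z).1 (fun u => H (z, u)) t s)
    rcases stretchTrans_mem_range (h z).1 (fun u => H (z, u)) t s with ⟨u, hu⟩ | ⟨u, hu⟩
    · rw [← hu, ← hγδ]
      exact (h z).2 1 u
    · rw [← hu]
      exact hH_rel z z 0 u (hZ.refl z)
  refine ⟨fun p => ⟨⟨fun s => L (p, s), hL.comp (continuous_const.prodMk continuous_id)⟩,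
    fun s s' => hY.trans (hY.symm (hL_stratum _ _ s)) (hL_stratum _ _ s')⟩, ⟨?_, ?_⟩, ?_, ?_⟩
  · exact (ContinuousMap.continuous_of_continuous_uncurry _ hL).subtype_mk _
  · intro z z' t t' hzz'
    show rY (L ((z, t), 0)) (L ((z', t'), 0))
    simpa only [L, stretchTrans_apply_zero, SPathRel] using hh_rel z z' hzz'
  · intro z t
    exact stretchTrans_apply_one (hγδ z) t
  · intro z
    exact Subtype.ext (ContinuousMap.ext fun s => congrFun (stretchTrans_zero _ _) s)

end StratifiedPathSpace

theorem pathSpace_eval_isStratFibration_general {Y : Type} [TopologicalSpace Y]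
    (rY : Y → Y → Prop) (hY : Equivalence rY) :
    IsStratMap (SPathRel rY) rY (fun ω : SPath Y rY => ω.1 1) ∧
    HasSHLP (SPathRel rY) rY (fun ω : SPath Y rY => ω.1 1) :=
  ⟨isStratMap_sPath_eval_one hY, hasSHLP_sPath_eval_one hY⟩

/-- evaluation at 1 on the stratified path space is a stratified map with the
stratified homotopy lifting property. -/
theorem pathSpace_eval_isStratFibration {Y : Type} [TopologicalSpace Y]
    (rY : Y → Y → Prop) (hY : Equivalence rY)
    (hpc : ∀ y : Y, IsPathConnected {y' | rY y y'}) :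
    IsStratMap (SPathRel rY) rY (fun ω : SPath Y rY => ω.1 1) ∧
    HasSHLP (SPathRel rY) rY (fun ω : SPath Y rY => ω.1 1) :=
  pathSpace_eval_isStratFibration_general rY hY
end

section
/- Every stratified map f : X → Y between stratified spaces factors as f = p ∘ s, where s : X → P_f is a stratified weak equivalence (has a stratified homotopy inverse) and p : P_f → Y is a stratified fibration (has the stratified homotopy lifting property). Here P_f = {(ω, x) : ω a path in Y contained in one stratum, ω(1) = f(x)}, s(x) = (constant path at f(x), x), and p(ω, x) = ω(0). -/
open unitInterval

/-- The mapping path space `P_f` of a stratified map `f : X → Y`. -/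
abbrev MappingPathSpace {X Y : Type} [TopologicalSpace X] [TopologicalSpace Y]
    (rY : Y → Y → Prop) (f : X → Y) : Type :=
  {z : SPath Y rY × X // z.1.1 1 = f z.2}

/-!
To lift a stratified homotopy `H` starting at `p (ω, x) = ω 0`, replace `ω` at time `t` by the
track of `H` run backwards from `H (z, t)` to `ω 0`, followed by `ω`; this path stays in one
stratum because `t ↦ H (z, t)` does. The homotopy inverse of `s` is `(ω, x) ↦ x`, and `s ∘ g`
is homotopic to the identity by sliding the start of each path `ω` to its endpoint `f x`.
-/

open unitInterval Set Function

section

variable {X Y Z : Type} [TopologicalSpace X] [TopologicalSpace Y]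

lemma isStratMap_id {rX : X → X → Prop} : IsStratMap rX rX id :=
  ⟨continuous_id, fun _ _ h => h⟩

lemma SHomotopic.refl {rX : X → X → Prop} {rY : Y → Y → Prop} {f : X → Y}
    (hf : IsStratMap rX rY f) : SHomotopic rX rY f f :=
  ⟨fun q => f q.1, ⟨hf.1.comp continuous_fst, fun x x' _ _ h => hf.2 x x' h⟩,
    fun _ => rfl, fun _ => rfl⟩

noncomputable def backThenAlong (H : Z × I → Y) (ω : Z → C(I, Y)) (z : Z) (s : ℝ) : Y :=
  if s ≤ 0 then IccExtend zero_le_one (fun t => H (z, t)) (-s)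
  else IccExtend zero_le_one (ω z) s

section backThenAlong

variable {H : Z × I → Y} {ω : Z → C(I, Y)}

lemma continuous_backThenAlong [TopologicalSpace Z] (hH : Continuous H) (hω : Continuous ω)
    (h0 : ∀ z, H (z, 0) = ω z 0) : Continuous ↿(backThenAlong H ω) := by
  refine Continuous.if_le ?_ ?_ continuous_snd continuous_const ?_
  · exact Continuous.IccExtend (f := fun (q : Z × ℝ) (t : I) => H (q.1, t))
      (hH.comp (by fun_prop)) (by fun_prop)
  · exact Continuous.IccExtend (f := fun (q : Z × ℝ) => ω q.1)
      (by fun_prop) continuous_snd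
  · rintro ⟨z, s⟩ (rfl : s = 0)
    simp [h0]

lemma backThenAlong_neg_coe (z : Z) (t : I) : backThenAlong H ω z (-t) = H (z, t) := by
  simp [backThenAlong, t.2.1]

lemma backThenAlong_coe (h0 : ∀ z, H (z, 0) = ω z 0) (z : Z) (u : I) :
    backThenAlong H ω z u = ω z u := by
  by_cases hu : (u : ℝ) ≤ 0
  · obtain rfl : u = 0 := le_antisymm hu u.2.1
    simp [backThenAlong, h0]
  · simp [backThenAlong, hu]

lemma backThenAlong_rel {rY : Y → Y → Prop} {z : Z} (hH : ∀ t, rY (H (z, t)) (ω z 0))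
    (hω : ∀ u, rY (ω z u) (ω z 0)) (s : ℝ) : rY (backThenAlong H ω z s) (ω z 0) := by
  unfold backThenAlong IccExtend
  split_ifs
  exacts [hH _, hω _]

end backThenAlong

namespace MappingPathSpace

variable {rX : X → X → Prop} {rY : Y → Y → Prop} {f : X → Y}

variable (rX rY f) in
def rel (z w : MappingPathSpace rY f) : Prop :=
  SPathRel rY z.1.1 w.1.1 ∧ rX z.1.2 w.1.2

def proj (z : MappingPathSpace rY f) : Y := z.1.1.1 0

def point (z : MappingPathSpace rY f) : X := z.1.2

variable (rY f) in
def incl (hY : ∀ y, rY y y) (x : X) : MappingPathSpace rY f :=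
  ⟨(⟨ContinuousMap.const I (f x), fun _ _ => hY _⟩, x), rfl⟩

lemma ext {z w : MappingPathSpace rY f} (hpath : ∀ u, z.1.1.1 u = w.1.1.1 u)
    (hpoint : z.1.2 = w.1.2) : z = w :=
  Subtype.ext (Prod.ext (Subtype.ext (ContinuousMap.ext hpath)) hpoint)

def ofFamily [TopologicalSpace Z] (γ : Z → I → Y) (hγ : Continuous ↿γ)
    (hγr : ∀ q u u', rY (γ q u) (γ q u')) (x : Z → X) (hγx : ∀ q, γ q 1 = f (x q))
    (q : Z) :
    MappingPathSpace rY f :=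
  ⟨(⟨⟨γ q, hγ.comp (Continuous.prodMk_right q)⟩, hγr q⟩, x q), hγx q⟩

lemma continuous_ofFamily [TopologicalSpace Z] {γ : Z → I → Y} (hγ : Continuous ↿γ)
    (hγr : ∀ q u u', rY (γ q u) (γ q u')) {x : Z → X} (hx : Continuous x)
    (hγx : ∀ q, γ q 1 = f (x q)) : Continuous (ofFamily γ hγ hγr x hγx) :=
  ((ContinuousMap.continuous_of_continuous_uncurry _ hγ).subtype_mk _).prodMk hx |>.subtype_mk _

lemma continuous_path : Continuous fun z : MappingPathSpace rY f => z.1.1.1 :=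
  continuous_subtype_val.comp (continuous_fst.comp continuous_subtype_val)

lemma isStratMap_proj : IsStratMap (rel rX rY f) rY proj :=
  ⟨(continuous_eval_const 0).comp continuous_path, fun _ _ h => h.1⟩

lemma isStratMap_point : IsStratMap (rel rX rY f) rX point :=
  ⟨continuous_snd.comp continuous_subtype_val, fun _ _ h => h.2⟩

lemma isStratMap_incl (hY : ∀ y, rY y y) (hf : IsStratMap rX rY f) :
    IsStratMap rX (rel rX rY f) (incl rY f hY) :=
  ⟨((ContinuousMap.continuous_const'.comp hf.1).subtype_mk _).prodMk continuous_id
      |>.subtype_mk _,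
    fun x x' h => ⟨hf.2 x x' h, h⟩⟩

lemma hasSHLP_proj (hY : Equivalence rY) : HasSHLP (rel rX rY f) rY proj := by
  intro Z _ rZ hZ _ h hh H hH hH0
  set ω : Z → C(I, Y) := fun z => (h z).1.1.1
  -- `u ↦ (1 + t) * u - t` maps `[0, 1]` affinely onto `[-t, 1]`
  -- `u ↦ (1 + t) * u - t` maps `[0, 1]` affinely onto `[-t, 1]`
  set γ : Z × I → I → Y := fun q u => backThenAlong H ω q.1 ((1 + q.2) * u - q.2)
  have hγ : Continuous ↿γ :=
    (continuous_backThenAlong hH.1 (continuous_path.comp hh.1) hH0).comp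
      (f := fun p : (Z × I) × I => (p.1.1, (1 + (p.1.2 : ℝ)) * p.2 - p.1.2)) (by fun_prop)
  have hγ0 (q : Z × I) : γ q 0 = H q := by
    simpa [γ] using backThenAlong_neg_coe (H := H) (ω := ω) q.1 q.2
  have hγ1 (q : Z × I) : γ q 1 = f (h q.1).1.2 := by
    simpa [γ] using (backThenAlong_coe hH0 q.1 1).trans (h q.1).2
  have hγr (q : Z × I) (u : I) : rY (γ q u) (ω q.1 0) :=
    backThenAlong_rel (H := H) (fun t => (hH0 q.1).subst (hH.2 q.1 q.1 t 0 (hZ.refl _)))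
      (fun u => (h q.1).1.1.2 u 0) _
  refine ⟨ofFamily γ hγ (fun q u u' => hY.trans (hγr q u) (hY.symm (hγr q u')))
      (fun q => (h q.1).1.2) hγ1,
    ⟨continuous_ofFamily _ _ (continuous_snd.comp (continuous_subtype_val.comp
      (hh.1.comp continuous_fst))) _, fun z z' t t' hzz' => ?_⟩,
    fun z t => hγ0 (z, t), fun z => ?_⟩
  · refine ⟨?_, (hh.2 z z' hzz').2⟩
    change rY (γ (z, t) 0) (γ (z', t') 0)
    simpa only [hγ0] using hH.2 z z' t t' hzz'
  · refine ext (fun u => ?_) rfl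
    simpa [ofFamily, γ] using backThenAlong_coe hH0 z u

lemma isStratFibration_proj (hY : Equivalence rY) : IsStratFibration (rel rX rY f) rY proj :=
  ⟨isStratMap_proj, hasSHLP_proj hY⟩

lemma sHomotopic_incl_comp_point (hY : Equivalence rY) :
    SHomotopic (rel rX rY f) (rel rX rY f) (incl rY f hY.refl ∘ point) id := by
  set γ : MappingPathSpace rY f × I → I → Y := fun q u => q.1.1.1.1 (σ (q.2 * σ u))
  have hγ : Continuous ↿γ :=
    continuous_eval.comp ((continuous_path.comp (continuous_fst.comp continuous_fst)).prodMk
      (continuous_symm.comp ((continuous_snd.comp continuous_fst).mul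
        (continuous_symm.comp continuous_snd))))
  have hγ1 (q : MappingPathSpace rY f × I) : γ q 1 = f q.1.1.2 := by simpa [γ] using q.1.2
  refine ⟨ofFamily γ hγ (fun q u u' => q.1.1.1.2 _ _) (fun q => q.1.1.2) hγ1,
    ⟨continuous_ofFamily _ _ (continuous_snd.comp (continuous_subtype_val.comp
      continuous_fst)) _, fun z z' t t' hzz' => ?_⟩,
    fun z => ext (fun u => by simpa [ofFamily, γ, incl, point] using z.2) rfl,
    fun z => ext (fun u => by simp [ofFamily, γ]) rfl⟩
  exact ⟨hY.trans (z.1.1.2 _ 0) (hY.trans hzz'.1 (z'.1.1.2 0 _)), hzz'.2⟩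

lemma isStratWeakEquiv_incl (hY : Equivalence rY) (hf : IsStratMap rX rY f) :
    IsStratWeakEquiv rX (rel rX rY f) (incl rY f hY.refl) :=
  ⟨isStratMap_incl hY.refl hf, point, isStratMap_point, sHomotopic_incl_comp_point hY,
    SHomotopic.refl isStratMap_id⟩

end MappingPathSpace

end

theorem stratMap_factors_weakEquiv_fibration_general {X Y : Type}
    [TopologicalSpace X] [TopologicalSpace Y]
    (rX : X → X → Prop) (rY : Y → Y → Prop)
    (hY : Equivalence rY)
    (f : X → Y) (hf : IsStratMap rX rY f)
    (rP : MappingPathSpace rY f → MappingPathSpace rY f → Prop)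
    (hrP : ∀ z w : MappingPathSpace rY f,
      rP z w ↔ SPathRel rY z.1.1 w.1.1 ∧ rX z.1.2 w.1.2) :
    IsStratFibration rP rY (fun z : MappingPathSpace rY f => z.1.1.1 0) ∧
    IsStratWeakEquiv rX rP
      (fun x : X =>
        (⟨(⟨ContinuousMap.const I (f x), fun _ _ => hY.refl _⟩, x), rfl⟩ :
          MappingPathSpace rY f)) ∧
    (∀ x : X,
      ((⟨(⟨ContinuousMap.const I (f x), fun _ _ => hY.refl _⟩, x), rfl⟩ :
          MappingPathSpace rY f)).1.1.1 0 = f x) := by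
  obtain rfl : rP = MappingPathSpace.rel rX rY f := by
    ext z w
    exact hrP z w
  exact ⟨MappingPathSpace.isStratFibration_proj hY,
    MappingPathSpace.isStratWeakEquiv_incl hY hf, fun _ => rfl⟩

/-- every stratified map factors as a stratified weak equivalence followed by
a stratified fibration, through the mapping path space. -/
theorem stratMap_factors_weakEquiv_fibration {X Y : Type}
    [TopologicalSpace X] [TopologicalSpace Y]
    (rX : X → X → Prop) (rY : Y → Y → Prop)
    (hX : Equivalence rX) (hY : Equivalence rY)
    (hpcX : ∀ x : X, IsPathConnected {x' | rX x x'})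
    (hpcY : ∀ y : Y, IsPathConnected {y' | rY y y'})
    (f : X → Y) (hf : IsStratMap rX rY f)
    (rP : MappingPathSpace rY f → MappingPathSpace rY f → Prop)
    (hrP : ∀ z w : MappingPathSpace rY f,
      rP z w ↔ SPathRel rY z.1.1 w.1.1 ∧ rX z.1.2 w.1.2) :
    IsStratFibration rP rY (fun z : MappingPathSpace rY f => z.1.1.1 0) ∧
    IsStratWeakEquiv rX rP
      (fun x : X =>
        (⟨(⟨ContinuousMap.const I (f x), fun _ _ => hY.refl _⟩, x), rfl⟩ :
          MappingPathSpace rY f)) ∧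
    (∀ x : X,
      ((⟨(⟨ContinuousMap.const I (f x), fun _ _ => hY.refl _⟩, x), rfl⟩ :
          MappingPathSpace rY f)).1.1.1 0 = f x) :=
  stratMap_factors_weakEquiv_fibration_general rX rY hY f hf rP hrP
end

section
/- Let (X, A, F_X) be a stratified pair and f : X → Y a stratified map admitting a right stratified-homotopy inverse g : Y → X (i.e., f ∘ g ≃_S id_Y). Then Ocat(Y, f(A), F_Y) ≤ Ocat(X, A, F_X). -/
open unitInterval

/-!
If `U ⊆ X` deforms into `A`, then `g⁻¹ U ⊆ Y` deforms into `f(A)`: first run the homotopy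
`id ≃ f ∘ g` backwards, then push the deformation of `U` forward along `f`. Since `g` is
stratified, it maps the induced strata of `g⁻¹ U` into induced strata of `U`, so both pieces are
stratified homotopies, and the preimage of a categorical cover of `X` is a categorical cover of `Y`.
-/

open Set

section StratHomotopy

variable {W X Y Z : Type} [TopologicalSpace W] [TopologicalSpace X] [TopologicalSpace Y]
  [TopologicalSpace Z] {rW : W → W → Prop} {rX : X → X → Prop} {rY : Y → Y → Prop}
  {rZ : Z → Z → Prop} {f g k : X → Y}

theorem SHomotopic.continuous_left (h : SHomotopic rX rY f g) : Continuous f := by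
  obtain ⟨H, ⟨hc, -⟩, h0, -⟩ := h
  rw [← funext h0]
  exact hc.comp (continuous_id.prodMk continuous_const)

theorem SHomotopic.continuous_right (h : SHomotopic rX rY f g) : Continuous g := by
  obtain ⟨H, ⟨hc, -⟩, -, h1⟩ := h
  rw [← funext h1]
  exact hc.comp (continuous_id.prodMk continuous_const)

theorem SHomotopic.symm (h : SHomotopic rX rY f g) : SHomotopic rX rY g f := by
  obtain ⟨H, ⟨hc, hs⟩, h0, h1⟩ := h
  refine ⟨fun p => H (p.1, σ p.2),
    ⟨hc.comp (continuous_fst.prodMk (continuous_symm.comp continuous_snd)),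
      fun x x' t t' hx => hs x x' _ _ hx⟩, fun x => ?_, fun x => ?_⟩
  · simpa only [symm_zero] using h1 x
  · simpa only [symm_one] using h0 x

theorem SHomotopic.comp_left {φ : Y → Z} (hφ : IsStratMap rY rZ φ)
    (h : SHomotopic rX rY f g) : SHomotopic rX rZ (φ ∘ f) (φ ∘ g) := by
  obtain ⟨H, ⟨hc, hs⟩, h0, h1⟩ := h
  exact ⟨φ ∘ H, ⟨hφ.1.comp hc, fun x x' t t' hx => hφ.2 _ _ (hs x x' t t' hx)⟩,
    fun x => congrArg φ (h0 x), fun x => congrArg φ (h1 x)⟩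

theorem SHomotopic.comp_right {ψ : W → X} (hψ : IsStratMap rW rX ψ)
    (h : SHomotopic rX rY f g) : SHomotopic rW rY (f ∘ ψ) (g ∘ ψ) := by
  obtain ⟨H, ⟨hc, hs⟩, h0, h1⟩ := h
  exact ⟨fun p => H (ψ p.1, p.2),
    ⟨hc.comp ((hψ.1.comp continuous_fst).prodMk continuous_snd),
      fun w w' t t' hw => hs _ _ t t' (hψ.2 w w' hw)⟩,
    fun w => h0 (ψ w), fun w => h1 (ψ w)⟩

/-- A point of the first half is compared with one of the second half through the common
middle map `g`. -/
theorem SHomotopic.trans (hX : ∀ x, rX x x) (hY : ∀ {a b c}, rY a b → rY b c → rY a c)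
    (h₁ : SHomotopic rX rY f g) (h₂ : SHomotopic rX rY g k) : SHomotopic rX rY f k := by
  obtain ⟨H₁, ⟨c₁, s₁⟩, H₁0, H₁1⟩ := id h₁
  obtain ⟨H₂, ⟨c₂, s₂⟩, H₂0, H₂1⟩ := id h₂
  let F₁ : ContinuousMap.Homotopy ⟨f, h₁.continuous_left⟩ ⟨g, h₁.continuous_right⟩ :=
    { toFun := fun p => H₁ (p.2, p.1)
      continuous_toFun := c₁.comp continuous_swap
      map_zero_left := H₁0
      map_one_left := H₁1 }
  let F₂ : ContinuousMap.Homotopy ⟨g, h₁.continuous_right⟩ ⟨k, h₂.continuous_right⟩ :=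
    { toFun := fun p => H₂ (p.2, p.1)
      continuous_toFun := c₂.comp continuous_swap
      map_zero_left := H₂0
      map_one_left := H₂1 }
  have s₁₂ : ∀ x x' t t', rX x x' → rY (H₁ (x, t)) (H₂ (x', t')) := fun x x' t t' hx =>
    hY (s₁ x x t 1 (hX x)) (by simpa only [H₁1, ← H₂0] using s₂ x x' 0 t' hx)
  have s₂₁ : ∀ x x' t t', rX x x' → rY (H₂ (x, t)) (H₁ (x', t')) := fun x x' t t' hx =>
    hY (by simpa only [H₂0, ← H₁1] using s₂ x x' t 0 hx) (s₁ x' x' 1 t' (hX x'))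
  refine ⟨fun p => F₁.trans F₂ (p.2, p.1),
    ⟨(F₁.trans F₂).continuous.comp continuous_swap, fun x x' t t' hx => ?_⟩,
    fun x => (F₁.trans F₂).apply_zero x, fun x => (F₁.trans F₂).apply_one x⟩
  simp only [ContinuousMap.Homotopy.trans_apply]
  split_ifs
  exacts [s₁ _ _ _ _ hx, s₁₂ _ _ _ _ hx, s₂₁ _ _ _ _ hx, s₂ _ _ _ _ hx]

end StratHomotopy

section LSCategory

variable {X Y : Type} [TopologicalSpace X] [TopologicalSpace Y] {rX : X → X → Prop}
  {rY : Y → Y → Prop}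

theorem relInduced.rel {U : Set X} {x x' : U} (h : relInduced rX U x x') : rX x x' :=
  (connectedComponentIn_subset _ _ h).2

theorem relInduced_refl (hX : ∀ x, rX x x) (U : Set X) (x : U) : relInduced rX U x x :=
  mem_connectedComponentIn ⟨x.2, hX x⟩

theorem isStratMap_subtype_val (U : Set X) : IsStratMap (relInduced rX U) rX Subtype.val :=
  ⟨continuous_subtype_val, fun _ _ => relInduced.rel⟩

theorem IsStratMap.restrictPreimage {g : Y → X} (hg : IsStratMap rY rX g) (U : Set X) :
    IsStratMap (relInduced rY (g ⁻¹' U)) (relInduced rX U) (U.restrictPreimage g) := by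
  refine ⟨hg.1.restrictPreimage, fun y y' hyy' => ?_⟩
  have hy := connectedComponentIn_nonempty_iff.1 ⟨_, hyy'⟩
  have hmaps : g '' connectedComponentIn {z | z ∈ g ⁻¹' U ∧ rY y z} y ⊆
      {x | x ∈ U ∧ rX (g y) x} := by
    rintro _ ⟨z, hz, rfl⟩
    obtain ⟨hzU, hyz⟩ := connectedComponentIn_subset _ _ hz
    exact ⟨hzU, hg.2 _ _ hyz⟩
  exact (isPreconnected_connectedComponentIn.image g hg.1.continuousOn).subset_connectedComponentIn
    (mem_image_of_mem g (mem_connectedComponentIn hy)) hmaps (mem_image_of_mem g hyy')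

theorem aCat_iff_exists_sHomotopic {A U : Set X} :
    ACat rX A U ↔ ∃ h : U → X, SHomotopic (relInduced rX U) rX Subtype.val h ∧ ∀ x, h x ∈ A := by
  constructor
  · rintro ⟨H, hH, h0, h1⟩
    exact ⟨fun x => H (x, 1), ⟨H, hH, h0, fun _ => rfl⟩, h1⟩
  · rintro ⟨h, ⟨H, hH, h0, h1⟩, hA⟩
    exact ⟨H, hH, h0, fun x => h1 x ▸ hA x⟩

theorem ACat.preimage (hY : Equivalence rY) {A U : Set X} {f : X → Y} {g : Y → X}
    (hf : IsStratMap rX rY f) (hg : IsStratMap rY rX g) (hfg : SHomotopic rY rY (f ∘ g) id)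
    (hU : ACat rX A U) : ACat rY (f '' A) (g ⁻¹' U) := by
  obtain ⟨h, hh, hA⟩ := aCat_iff_exists_sHomotopic.1 hU
  have h₁ : SHomotopic (relInduced rY (g ⁻¹' U)) rY Subtype.val (f ∘ g ∘ Subtype.val) :=
    hfg.symm.comp_right (isStratMap_subtype_val _)
  have h₂ : SHomotopic (relInduced rY (g ⁻¹' U)) rY (f ∘ Subtype.val ∘ U.restrictPreimage g)
      (f ∘ h ∘ U.restrictPreimage g) :=
    (hh.comp_right (hg.restrictPreimage U)).comp_left hf
  exact aCat_iff_exists_sHomotopic.2 ⟨_, h₁.trans (relInduced_refl hY.refl _) hY.trans h₂,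
    fun y => mem_image_of_mem f (hA _)⟩

theorem OcatLe.preimage (hY : Equivalence rY) {A : Set X} {f : X → Y} {g : Y → X}
    (hf : IsStratMap rX rY f) (hg : IsStratMap rY rX g) (hfg : SHomotopic rY rY (f ∘ g) id)
    {n : ℕ} (h : OcatLe rX A n) : OcatLe rY (f '' A) n := by
  obtain ⟨U, hUo, hUc, hUcat⟩ := h
  exact ⟨fun i => g ⁻¹' U i, fun i => (hUo i).preimage hg.1, fun y => hUc (g y),
    fun i => (hUcat i).preimage hY hf hg hfg⟩

theorem ocat_le_ocat {A : Set X} {B : Set Y} (h : ∀ n, OcatLe rX A n → OcatLe rY B n) :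
    Ocat rY B ≤ Ocat rX A :=
  sInf_le_sInf fun _ ⟨n, hc, hn⟩ => ⟨n, hc, h n hn⟩

end LSCategory

theorem ocat_image_le_general {X Y : Type} [TopologicalSpace X] [TopologicalSpace Y]
    (rX : X → X → Prop) (rY : Y → Y → Prop)
    (hY : Equivalence rY)
    (A : Set X) (f : X → Y) (g : Y → X)
    (hf : IsStratMap rX rY f) (hg : IsStratMap rY rX g)
    (hfg : SHomotopic rY rY (f ∘ g) id) :
    Ocat rY (f '' A) ≤ Ocat rX A :=
  ocat_le_ocat fun _ => OcatLe.preimage hY hf hg hfg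

/-- if `f` has a right stratified homotopy inverse `g`, then
`Ocat(Y, f(A), F_Y) ≤ Ocat(X, A, F_X)`. -/
theorem ocat_image_le {X Y : Type} [TopologicalSpace X] [TopologicalSpace Y]
    (rX : X → X → Prop) (rY : Y → Y → Prop)
    (hX : Equivalence rX) (hY : Equivalence rY)
    (A : Set X) (f : X → Y) (g : Y → X)
    (hf : IsStratMap rX rY f) (hg : IsStratMap rY rX g)
    (hfg : SHomotopic rY rY (f ∘ g) id) :
    Ocat rY (f '' A) ≤ Ocat rX A :=
  ocat_image_le_general rX rY hY A f g hf hg hfg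
end

section
/- Let X = ℝ² with the stratification F whose strata are the orbits of the rotation group SO(2) (the origin and the circles centered at the origin), and let A = {(x, 0) : x ≥ 0} be the nonnegative x-axis. Then Ocat(ℝ², A, F) = ∞: there is no finite cover of ℝ² by A-categorical open sets. -/
open unitInterval

/-!
Every open neighbourhood `U` of the origin contains a circle `C` of some radius `ρ > 0`. A
stratified deformation of `U` keeps each point on its own orbit, and the only point of `C` in
`A` is `(ρ, 0)`; restricted to `C` it would therefore be a null-homotopy of the identity of the
circle. Lifting that null-homotopy along the universal covering `ℝ → S¹` gives a contradiction:
at time `1` the lift is constant, yet at every time it shifts by `2π` along a full turn.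
-/

open Real

theorem relInduced_self {X : Type} [TopologicalSpace X] {rX : X → X → Prop} (hr : ∀ x, rX x x)
    {U : Set X} (x : U) : relInduced rX U x x :=
  mem_connectedComponentIn ⟨x.2, hr x⟩

theorem ocat_eq_top_of_not_aCat {X : Type} [TopologicalSpace X] {rX : X → X → Prop}
    {A : Set X} (x₀ : X) (h : ∀ U, IsOpen U → x₀ ∈ U → ¬ ACat rX A U) : Ocat rX A = ⊤ := by
  refine sInf_eq_top.mpr ?_
  rintro _ ⟨n, rfl, U, hU, hcover, hcat⟩
  obtain ⟨i, hi⟩ := hcover x₀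
  exact (h _ (hU i) hi (hcat i)).elim

theorem Circle.not_homotopic_id_const (c : Circle) :
    ¬ (ContinuousMap.id Circle).Homotopic (ContinuousMap.const Circle c) := by
  rintro ⟨F⟩
  have cov := Circle.isCoveringMap_exp
  let Φ : C(I × ℝ, Circle) := F.toContinuousMap.comp ((ContinuousMap.id I).prodMap Circle.exp)
  have Φ_zero (θ : ℝ) : Φ (0, θ) = Circle.exp (ContinuousMap.id ℝ θ) := F.apply_zero _
  let G := cov.liftHomotopy Φ (ContinuousMap.id ℝ) Φ_zero
  have G_lifts (p : I × ℝ) : Circle.exp (G p) = Φ p := congr_fun (cov.liftHomotopy_lifts ..) p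
  have G_one_const : G (1, 2 * π) = G (1, 0) :=
    cov.const_of_comp (g := fun θ => G (1, θ)) (by fun_prop)
      (fun θ θ' => by simp [G_lifts, Φ]) _ _
  have G_periodic : G (1, 2 * π) = G (1, 0) + 2 * π := by
    refine congr_fun (cov.eq_of_comp_eq (g₁ := fun t => G (t, 2 * π))
      (g₂ := fun t => G (t, 0) + 2 * π) (by fun_prop) (by fun_prop) ?_ 0 ?_) 1
    · ext t
      simp [G_lifts, Circle.exp_add, Φ]
    · simp [G, cov.liftHomotopy_zero]
  linarith [pi_pos]

theorem Circle.homotopic_of_norm_eq {ρ : ℝ} (hρ : 0 < ρ) {f g : C(Circle, Circle)}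
    (K : C(I × Circle, ℂ)) (hK : ∀ p, ‖K p‖ = ρ) (hK₀ : ∀ z, K (0, z) = ρ * f z)
    (hK₁ : ∀ z, K (1, z) = ρ * g z) : f.Homotopic g := by
  have hρ' : (ρ : ℂ) ≠ 0 := by exact_mod_cast hρ.ne'
  have mem (p : I × Circle) : K p / ρ ∈ Submonoid.unitSphere ℂ := by
    simp [Submonoid.unitSphere, hK, abs_of_pos hρ, hρ.ne']
  refine ⟨{ toFun := fun p => ⟨K p / ρ, mem p⟩
            continuous_toFun := (by fun_prop : Continuous fun p => K p / ρ).subtype_mk mem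
            map_zero_left := fun z => ?_
            map_one_left := fun z => ?_ }⟩
  all_goals ext1; simp [hK₀, hK₁, hρ']

def rotationOrbitRel (p q : ℝ × ℝ) : Prop := p.1 ^ 2 + p.2 ^ 2 = q.1 ^ 2 + q.2 ^ 2

def nonnegXAxis : Set (ℝ × ℝ) := {p | 0 ≤ p.1 ∧ p.2 = 0}

theorem rotationOrbitRel_iff_norm_eq {p q : ℝ × ℝ} : rotationOrbitRel p q ↔
    ‖Complex.equivRealProd.symm p‖ = ‖Complex.equivRealProd.symm q‖ := by
  simp only [rotationOrbitRel, Complex.equivRealProd_symm_apply, Complex.norm_add_mul_I]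
  exact (sqrt_inj (by positivity) (by positivity)).symm

theorem equivRealProd_symm_eq_norm_of_mem_nonnegXAxis {p : ℝ × ℝ} (hp : p ∈ nonnegXAxis) :
    Complex.equivRealProd.symm p = ‖Complex.equivRealProd.symm p‖ := by
  obtain ⟨hp₁, hp₂⟩ := hp
  simp [Complex.equivRealProd_symm_apply, hp₂, abs_of_nonneg hp₁]

theorem not_aCat_rotationOrbitRel_of_zero_mem {U : Set (ℝ × ℝ)} (hU : IsOpen U)
    (h0 : (0 : ℝ × ℝ) ∈ U) : ¬ ACat rotationOrbitRel nonnegXAxis U := by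
  rintro ⟨H, ⟨hH, hHrel⟩, hH₀, hH₁⟩
  obtain ⟨ε, hε, hball⟩ := Metric.isOpen_iff.mp hU 0 h0
  set ρ := ε / 2
  have hρ : 0 < ρ := by positivity
  have norm_ρz (z : Circle) : ‖(ρ : ℂ) * z‖ = ρ := by
    rw [norm_mul, Circle.norm_coe, mul_one, Complex.norm_real, Real.norm_of_nonneg hρ.le]
  have mem_U (z : Circle) : Complex.equivRealProd (ρ * z) ∈ U :=
    hball <| mem_ball_zero_iff.mpr <| (Complex.equivRealProd_apply_le _).trans_lt <| by
      rw [norm_ρz]; exact half_lt_self hε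
  let e : C(Circle, U) :=
    ⟨fun z => ⟨_, mem_U z⟩, (Complex.equivRealProdCLM.continuous.comp (by fun_prop)).subtype_mk _⟩
  have e_apply (z : Circle) : (e z : ℝ × ℝ) = Complex.equivRealProd (ρ * z) := rfl
  let K : C(I × Circle, ℂ) := ⟨fun p => Complex.equivRealProd.symm (H (e p.2, p.1)),
    Complex.equivRealProdCLM.symm.continuous.comp (hH.comp (by fun_prop))⟩
  have norm_K (p : I × Circle) : ‖K p‖ = ρ := by
    have := hHrel (e p.2) (e p.2) 0 p.1 (relInduced_self (rX := rotationOrbitRel) (fun _ => rfl) _)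
    rw [rotationOrbitRel_iff_norm_eq, hH₀, e_apply, Equiv.symm_apply_apply] at this
    change ‖Complex.equivRealProd.symm (H (e p.2, p.1))‖ = ρ
    rw [← this, norm_ρz]
  refine Circle.not_homotopic_id_const 1
    (Circle.homotopic_of_norm_eq hρ K norm_K (fun z => ?_) (fun z => ?_))
  · change Complex.equivRealProd.symm (H (e z, 0)) = _
    rw [hH₀, e_apply, Equiv.symm_apply_apply, ContinuousMap.id_apply]
  · rw [ContinuousMap.const_apply, Circle.coe_one, mul_one, ← norm_K (1, z)]
    exact equivRealProd_symm_eq_norm_of_mem_nonnegXAxis (hH₁ _)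

/-- the plane stratified by the orbits of `SO(2)` (circles centered at the
origin), with `A` the nonnegative `x`-axis, has infinite open LS-category. -/
theorem ocat_plane_rotation_orbits_eq_top :
    Ocat (fun p q : ℝ × ℝ => p.1 ^ 2 + p.2 ^ 2 = q.1 ^ 2 + q.2 ^ 2)
      {p : ℝ × ℝ | 0 ≤ p.1 ∧ p.2 = 0} = ⊤ :=
  ocat_eq_top_of_not_aCat 0 fun _ hU h0 => not_aCat_rotationOrbitRel_of_zero_mem hU h0
end

section
/- For any stratified pair (X, A, F_X) and any n, the n-th Ganea fibration g_n : G_n(X, A, F_X) → X, (α₁,...,α_{n+1}) ↦ α₁(1), admits a stratified section if and only if the diagonal Δ : X → X^{n+1} factors up to stratified homotopy through the inclusion of the n-th fat wedge T_n(X, A, F_X) ⊆ X^{n+1}. Consequently Whcat(X, A, F_X) = Gcat(X, A, F_X). -/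
open unitInterval

/-!
A stratified section `s` of the Ganea fibration assigns to each `x` an `(n+1)`-tuple of
stratified paths ending at `x`, one of which starts in `A`. Running all of them backwards is a
stratified homotopy from the diagonal to the tuple of their starting points, which lies in the
fat wedge. Conversely, if `H` is a stratified homotopy from the diagonal to a map into the fat
wedge, the coordinates of `t ↦ H (x, 1 - t)` are stratified paths ending at `x`, one starting
in `A`, so they form a section. The two categories are then infima of the same set.
-/

section Ganea

variable {X : Type} [TopologicalSpace X] {rX : X → X → Prop} {A : Set X} {n : ℕ}

theorem continuous_ganea_eval :
    Continuous fun p : GaneaSet rX A n × I => fun i => (p.1.1 i).1 p.2 :=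
  continuous_pi fun i =>
    continuous_eval.comp (f := fun p : GaneaSet rX A n × I => ((p.1.1 i).1, p.2)) <|
    (continuous_subtype_val.comp ((continuous_apply i).comp
      (continuous_subtype_val.comp continuous_fst))).prodMk continuous_snd

theorem relGanea.rel_eval [IsTrans X rX]
    {α β : GaneaSet rX A n} (h : relGanea rX A n α β) (i : Fin (n + 1)) (t t' : I) :
    rX ((α.1 i).1 t) ((β.1 i).1 t') :=
  _root_.trans (_root_.trans ((α.1 i).2 t 0) (h i)) ((β.1 i).2 0 t')

theorem GcatLe.whcatLe [IsTrans X rX] (h : GcatLe rX A n) : WhcatLe rX A n := by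
  obtain ⟨s, ⟨hs, hs_strat⟩, hs_sec⟩ := h
  let H : X × I → Fin (n + 1) → X := fun p i => ((s p.1).1 i).1 (σ p.2)
  have hH : Continuous H :=
    continuous_ganea_eval.comp
      ((hs.comp continuous_fst).prodMk (continuous_symm.comp continuous_snd))
  have hH_strat : ∀ x x' t t', rX x x' → relPi rX (H (x, t)) (H (x', t')) :=
    fun x x' t t' hxx' i => (hs_strat x x' hxx').rel_eval i (σ t) (σ t')
  refine ⟨fun x => H (x, 1), ⟨?_, fun x x' hxx' => hH_strat x x' 1 1 hxx'⟩, ?_,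
    H, ⟨hH, hH_strat⟩, ?_, fun _ => rfl⟩
  · exact hH.comp (continuous_id.prodMk continuous_const)
  · intro x
    obtain ⟨k, hk⟩ := (s x).2.2
    exact ⟨k, by simpa [H] using hk⟩
  · intro x
    funext i
    simp only [H, symm_zero, (s x).2.1 i]
    exact hs_sec x

theorem WhcatLe.gcatLe [Std.Refl rX] (h : WhcatLe rX A n) : GcatLe rX A n := by
  obtain ⟨r, -, hr_wedge, H, ⟨hH, hH_strat⟩, hH0, hH1⟩ := h
  let F : Fin (n + 1) → C(X × I, X) := fun i =>
    ⟨fun p => H (p.1, σ p.2) i, by fun_prop⟩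
  let α : X → Fin (n + 1) → SPath X rX := fun x i =>
    ⟨(F i).curry x, fun t t' => hH_strat x x (σ t) (σ t') (refl_of rX x) i⟩
  have hα_end : ∀ x i, (α x i).1 1 = x := fun x i => by
    simp [α, F, hH0]
  have hα_mem : ∀ x, α x ∈ GaneaSet rX A n := by
    refine fun x => ⟨fun i => by rw [hα_end, hα_end], ?_⟩
    obtain ⟨k, hk⟩ := hr_wedge x
    exact ⟨k, by simpa [α, F, hH1] using hk⟩
  refine ⟨fun x => ⟨α x, hα_mem x⟩, ⟨?_, ?_⟩, fun x => hα_end x 0⟩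
  · exact (continuous_pi fun i => (F i).curry.continuous.subtype_mk _).subtype_mk _
  · exact fun x x' hxx' i => hH_strat x x' (σ 0) (σ 0) hxx' i

end Ganea

theorem gcat_eq_whcat_general {X : Type} [TopologicalSpace X]
    (rX : X → X → Prop) (hX : Equivalence rX) (A : Set X) :
    (∀ n : ℕ, GcatLe rX A n ↔ WhcatLe rX A n) ∧ Gcat rX A = Whcat rX A := by
  have := hX.isTrans
  have := hX.stdRefl
  have key : ∀ n : ℕ, GcatLe rX A n ↔ WhcatLe rX A n :=
    fun _ => ⟨GcatLe.whcatLe, WhcatLe.gcatLe⟩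
  exact ⟨key, by simp only [Gcat, Whcat, key]⟩

/-- the `n`-th Ganea fibration admits a stratified section iff the diagonal
factors up to stratified homotopy through the `n`-th fat wedge; hence
`Whcat(X,A,F_X) = Gcat(X,A,F_X)`. -/
theorem gcat_eq_whcat {X : Type} [TopologicalSpace X]
    (rX : X → X → Prop) (hX : Equivalence rX)
    (hpc : ∀ x : X, IsPathConnected {x' | rX x x'}) (A : Set X) :
    (∀ n : ℕ, GcatLe rX A n ↔ WhcatLe rX A n) ∧ Gcat rX A = Whcat rX A :=
  gcat_eq_whcat_general rX hX A
end

section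
/- The square with top map g_n : G_n(X, A, F_X) → X, left map ε_n : G_n(X,A,F_X) → T_n(X,A,F_X), (α₁,...,α_{n+1}) ↦ (α₁(0),...,α_{n+1}(0)), right map the diagonal Δ : X → X^{n+1}, and bottom map the inclusion t_n : T_n(X,A,F_X) → X^{n+1}, commutes up to stratified homotopy and is a homotopy pullback in the fibration category of stratified spaces: G_n(X,A,F_X) is the strict pullback of t_n along the path-space fibration replacing Δ. -/
/-! Reversing every path of a Ganea tuple is a stratified homotopy from the constant tuple at
the common endpoint to the tuple of starting points; each path stays in one stratum, so by
transitivity the homotopy respects strata. The pullback statement is a reshuffling of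
the data: a Ganea tuple is a point of the diagonal path space whose starting points lie in
the fat wedge. -/

open unitInterval

/-- Tuples of stratified paths with common endpoint: the fibrant replacement of the
diagonal `X → X^{n+1}` (evaluation at `0` is the associated fibration). -/
abbrev DiagPathSpace (X : Type) [TopologicalSpace X] (rX : X → X → Prop) (n : ℕ) : Type :=
  {α : Fin (n + 1) → SPath X rX // ∀ i, (α i).1 1 = (α 0).1 1}

/-- The strict pullback of the fat-wedge inclusion `t_n` along the evaluation-at-0
fibration `DiagPathSpace X rX n → X^{n+1}`. -/
abbrev GaneaPullback (X : Type) [TopologicalSpace X] (rX : X → X → Prop)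
    (A : Set X) (n : ℕ) : Type :=
  {z : DiagPathSpace X rX n × FatWedge A n //
    (fun i => ((z.1.1 i).1 0)) = (z.2 : Fin (n + 1) → X)}

theorem SPath.rel_of_rel_zero {Y : Type} [TopologicalSpace Y] {rY : Y → Y → Prop}
    [IsTrans Y rY] {ω ω' : SPath Y rY} (h : rY (ω.1 0) (ω'.1 0)) (t t' : I) :
    rY (ω.1 t) (ω'.1 t') :=
  _root_.trans (_root_.trans (ω.2 t 0) h) (ω'.2 0 t')

theorem continuous_sPath_eval {Z Y : Type} [TopologicalSpace Z] [TopologicalSpace Y]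
    {rY : Y → Y → Prop} {γ : Z → SPath Y rY} (hγ : Continuous γ) {s : Z → I}
    (hs : Continuous s) : Continuous fun z => (γ z).1 (s z) :=
  continuous_eval.comp (hγ.subtype_val.prodMk hs)

theorem sHomotopic_eval_one_eval_zero {Z X : Type} [TopologicalSpace Z] [TopologicalSpace X]
    {rZ : Z → Z → Prop} {rX : X → X → Prop} [IsTrans X rX] {n : ℕ}
    (γ : Z → Fin (n + 1) → SPath X rX) (hγ : Continuous γ)
    (hrel : ∀ z z', rZ z z' → ∀ i, rX ((γ z i).1 0) ((γ z' i).1 0)) :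
    SHomotopic rZ (relPi rX) (fun z i => (γ z i).1 1) (fun z i => (γ z i).1 0) := by
  refine ⟨fun p i => (γ p.1 i).1 (σ p.2), ⟨?_, ?_⟩, ?_, ?_⟩
  · exact continuous_pi fun i =>
      continuous_sPath_eval ((continuous_apply i).comp (hγ.comp continuous_fst))
        (continuous_symm.comp continuous_snd)
  · exact fun z z' t t' h i => SPath.rel_of_rel_zero (hrel z z' h i) _ _
  · exact fun z => by simp only [symm_zero]
  · exact fun z => by simp only [symm_one]

def ganeaSetHomeomorphPullback {X : Type} [TopologicalSpace X] (rX : X → X → Prop)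
    (A : Set X) (n : ℕ) : GaneaSet rX A n ≃ₜ GaneaPullback X rX A n where
  toFun α := ⟨(⟨α.1, α.2.1⟩, ⟨fun i => (α.1 i).1 0, α.2.2⟩), rfl⟩
  invFun z := ⟨z.1.1.1, z.1.1.2, by
    obtain ⟨k, hk⟩ := z.1.2.2
    exact ⟨k, (congrFun z.2 k).symm ▸ hk⟩⟩
  left_inv _ := rfl
  right_inv z := Subtype.ext (Prod.ext rfl (Subtype.ext z.2))
  continuous_toFun := by
    refine .subtype_mk (.prodMk (continuous_subtype_val.subtype_mk _) ?_) _
    exact .subtype_mk (continuous_pi fun i => continuous_sPath_eval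
      ((continuous_apply (A := fun _ : Fin (n + 1) => SPath X rX) i).comp
        continuous_subtype_val) continuous_const) _
  continuous_invFun := continuous_subtype_val.fst.subtype_val.subtype_mk _

theorem ganea_square_homotopy_pullback_general {X : Type} [TopologicalSpace X]
    (rX : X → X → Prop) (hX : Equivalence rX)
    (A : Set X) (n : ℕ) :
    SHomotopic (relGanea rX A n) (relPi rX)
      (fun α : GaneaSet rX A n => fun _ => ganeaMap rX A n α)
      (fun α : GaneaSet rX A n => fun i => (α.1 i).1 0) ∧
    ∃ e : GaneaSet rX A n ≃ₜ GaneaPullback X rX A n,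
      (∀ α β : GaneaSet rX A n, relGanea rX A n α β ↔
        ((∀ i, rX (((e α).1.1.1 i).1 0) (((e β).1.1.1 i).1 0)) ∧
         (∀ i, rX (((e α).1.2 : Fin (n + 1) → X) i) (((e β).1.2 : Fin (n + 1) → X) i)))) ∧
      (∀ (α : GaneaSet rX A n) (i : Fin (n + 1)) (t : I),
        ((e α).1.1.1 i).1 t = (α.1 i).1 t) := by
  have := hX.isTrans
  have common_endpoint : (fun α : GaneaSet rX A n => fun _ : Fin (n + 1) => ganeaMap rX A n α) =
      fun α i => (α.1 i).1 1 := funext fun α => funext fun i => (α.2.1 i).symm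
  refine ⟨?_, ganeaSetHomeomorphPullback rX A n, fun _ _ => ⟨fun h => ⟨h, h⟩, And.left⟩,
    fun _ _ _ => rfl⟩
  rw [common_endpoint]
  exact sHomotopic_eval_one_eval_zero (fun α : GaneaSet rX A n => α.1) continuous_subtype_val
    fun _ _ h => h

/-- the Ganea/fat-wedge square commutes up to stratified homotopy and is a
homotopy pullback: `G_n(X,A,F_X)` is the strict pullback of `t_n` along the path-space
fibration replacing the diagonal. -/
theorem ganea_square_homotopy_pullback {X : Type} [TopologicalSpace X]
    (rX : X → X → Prop) (hX : Equivalence rX)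
    (hpc : ∀ x : X, IsPathConnected {x' | rX x x'}) (A : Set X) (n : ℕ) :
    SHomotopic (relGanea rX A n) (relPi rX)
      (fun α : GaneaSet rX A n => fun _ => ganeaMap rX A n α)
      (fun α : GaneaSet rX A n => fun i => (α.1 i).1 0) ∧
    ∃ e : GaneaSet rX A n ≃ₜ GaneaPullback X rX A n,
      (∀ α β : GaneaSet rX A n, relGanea rX A n α β ↔
        ((∀ i, rX (((e α).1.1.1 i).1 0) (((e β).1.1.1 i).1 0)) ∧
         (∀ i, rX (((e α).1.2 : Fin (n + 1) → X) i) (((e β).1.2 : Fin (n + 1) → X) i)))) ∧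
      (∀ (α : GaneaSet rX A n) (i : Fin (n + 1)) (t : I),
        ((e α).1.1.1 i).1 t = (α.1 i).1 t) :=
  ganea_square_homotopy_pullback_general rX hX A n
end

section
/- Let (X, F_X) be a stratified space with X a normal topological space, and A ⊆ X. Then Whcat(X, A, F_X) ≤ Ocat(X, A, F_X): if X is covered by n+1 A-categorical open sets, then the diagonal X → X^{n+1} factors up to stratified homotopy through the n-th fat wedge T_n(X, A, F_X). -/
/-!
Choose cutoffs `φᵢ` subordinate to the categorical cover `Uᵢ` such that every point has some
`φᵢ = 1` (a bump covering, available in a normal space). Running the categorical homotopy `Hᵢ`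
of `Uᵢ` only up to time `φᵢ x`, and not at all outside `Uᵢ`, gives a stratified homotopy
`Ĥᵢ : X × I → X` defined on all of `X`; each `Ĥᵢ(x, t)` stays in the stratum of `x`. The tuple
`(Ĥᵢ)ᵢ` deforms the diagonal into a map whose `i`-th coordinate lies in `A` wherever `φᵢ = 1`,
hence into the fat wedge.
-/

open unitInterval

open Set Topology

section DampedHomotopy

variable {X : Type} {U : Set X} {H : U × I → X} {φ : X → ℝ}

open Classical in
/-- The paper's `Ĥ(x, t) = H(x, φ(x) t)`; the time is clamped to `I`, so `φ` needs no bounds. -/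
noncomputable def dampedHomotopy (U : Set X) (H : U × I → X) (φ : X → ℝ) (p : X × I) : X :=
  if h : p.1 ∈ U then H (⟨p.1, h⟩, projIcc 0 1 zero_le_one (φ p.1 * p.2)) else p.1

theorem dampedHomotopy_of_eq_zero (hH0 : ∀ u, H (u, 0) = u) {x : X} (hx : φ x = 0) (t : I) :
    dampedHomotopy U H φ (x, t) = x := by
  unfold dampedHomotopy
  split_ifs with hxU
  · simp only [hx, zero_mul, projIcc_left]
    exact hH0 ⟨x, hxU⟩
  · rfl

theorem dampedHomotopy_zero (hH0 : ∀ u, H (u, 0) = u) (x : X) :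
    dampedHomotopy U H φ (x, 0) = x := by
  unfold dampedHomotopy
  split_ifs with hxU
  · simp only [Icc.coe_zero, mul_zero, projIcc_left]
    exact hH0 ⟨x, hxU⟩
  · rfl

theorem dampedHomotopy_one {x : X} (hxU : x ∈ U) (hx : φ x = 1) :
    dampedHomotopy U H φ (x, 1) = H (⟨x, hxU⟩, 1) := by
  simp only [dampedHomotopy, dif_pos hxU, hx, Icc.coe_one, mul_one, projIcc_right]
  rfl

variable [TopologicalSpace X]

theorem continuousOn_dampedHomotopy (hH : Continuous H) (hφ : Continuous φ) :
    ContinuousOn (dampedHomotopy U H φ) (U ×ˢ univ) := by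
  rw [continuousOn_iff_continuous_domRestrict]
  have hrestrict : (U ×ˢ univ).domRestrict (dampedHomotopy U H φ) = fun q =>
      H (⟨q.1.1, q.2.1⟩, projIcc 0 1 zero_le_one (φ q.1.1 * q.1.2)) :=
    funext fun q => dif_pos q.2.1
  rw [hrestrict]
  refine hH.comp (.prodMk (.subtype_mk (by fun_prop) _) (continuous_projIcc.comp ?_))
  fun_prop

theorem continuous_dampedHomotopy (hU : IsOpen U) (hH : Continuous H) (hφ : Continuous φ)
    (hφU : tsupport φ ⊆ U) (hH0 : ∀ u, H (u, 0) = u) : Continuous (dampedHomotopy U H φ) := by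
  refine continuous_iff_continuousAt.2 fun p => ?_
  by_cases hp : p.1 ∈ U
  · exact (continuousOn_dampedHomotopy hH hφ).continuousAt
      ((hU.prod isOpen_univ).mem_nhds ⟨hp, trivial⟩)
  · have hφ0 : φ =ᶠ[𝓝 p.1] 0 := notMem_tsupport_iff_eventuallyEq.1 fun h => hp (hφU h)
    refine continuousAt_fst.congr ?_
    filter_upwards [continuousAt_fst.eventually hφ0] with q hq
    exact (dampedHomotopy_of_eq_zero hH0 hq q.2).symm

theorem rel_dampedHomotopy {rX : X → X → Prop} (hrefl : ∀ x, rX x x)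
    (hH : IsStratHomotopy (relInduced rX U) rX H) (hH0 : ∀ u, H (u, 0) = u) (p : X × I) :
    rX (dampedHomotopy U H φ p) p.1 := by
  unfold dampedHomotopy
  split_ifs with hpU
  · have hself : relInduced rX U ⟨p.1, hpU⟩ ⟨p.1, hpU⟩ := mem_connectedComponentIn ⟨hpU, hrefl _⟩
    simpa only [hH0] using hH.2 _ _ _ 0 hself
  · exact hrefl _

end DampedHomotopy

theorem IsStratHomotopy.isStratMap_slice {X Y : Type} [TopologicalSpace X] [TopologicalSpace Y]
    {rX : X → X → Prop} {rY : Y → Y → Prop} {H : X × I → Y} (hH : IsStratHomotopy rX rY H)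
    (t : I) : IsStratMap rX rY fun x => H (x, t) :=
  ⟨hH.1.comp (.prodMk continuous_id continuous_const), fun x x' h => hH.2 x x' t t h⟩

theorem isStratHomotopy_pi {X : Type} [TopologicalSpace X] {rX : X → X → Prop}
    (hX : Equivalence rX) {n : ℕ} {G : Fin (n + 1) → X × I → X} (hG : ∀ i, Continuous (G i))
    (hGrel : ∀ i p, rX (G i p) p.1) : IsStratHomotopy rX (relPi rX) fun p i => G i p :=
  ⟨continuous_pi hG, fun x x' t t' h i =>
    hX.trans (hGrel i (x, t)) (hX.trans h (hX.symm (hGrel i (x', t'))))⟩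

theorem whcatLe_of_ocatLe {X : Type} [TopologicalSpace X] [NormalSpace X] {rX : X → X → Prop}
    (hX : Equivalence rX) {A : Set X} {n : ℕ} (h : OcatLe rX A n) : WhcatLe rX A n := by
  obtain ⟨U, hUo, hUc, hUA⟩ := h
  choose H hH hH0 hH1 using hUA
  obtain ⟨φ, hφU⟩ := BumpCovering.exists_isSubordinate_of_locallyFinite isClosed_univ U hUo
    (locallyFinite_of_finite _) fun x _ => mem_iUnion.2 (hUc x)
  set G := fun i => dampedHomotopy (U i) (H i) (φ i)
  have hG : IsStratHomotopy rX (relPi rX) fun p i => G i p :=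
    isStratHomotopy_pi hX
      (fun i => continuous_dampedHomotopy (hUo i) (hH i).1 (φ i).continuous (hφU i) (hH0 i))
      fun i => rel_dampedHomotopy hX.refl (hH i) (hH0 i)
  refine ⟨fun x i => G i (x, 1), hG.isStratMap_slice 1, fun x => ⟨φ.ind x trivial, ?_⟩,
    _, hG, fun x => funext fun i => dampedHomotopy_zero (hH0 i) x, fun _ => rfl⟩
  have hφx := φ.ind_apply x trivial
  have hxU : x ∈ U (φ.ind x trivial) := hφU _ (subset_tsupport _ (by simp [hφx]))
  simpa only [G, dampedHomotopy_one hxU hφx] using hH1 _ ⟨x, hxU⟩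

theorem whcat_le_ocat_general {X : Type} [TopologicalSpace X] [NormalSpace X]
    (rX : X → X → Prop) (hX : Equivalence rX) (A : Set X) :
    (∀ n : ℕ, OcatLe rX A n → WhcatLe rX A n) ∧ Whcat rX A ≤ Ocat rX A :=
  ⟨fun _ => whcatLe_of_ocatLe hX,
    sInf_le_sInf fun _ ⟨n, hc, h⟩ => ⟨n, hc, whcatLe_of_ocatLe hX h⟩⟩

/-- for a normal space, `Whcat(X,A,F_X) ≤ Ocat(X,A,F_X)`: a cover by `n+1`
`A`-categorical open sets yields a factorization of the diagonal through the fat wedge. -/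
theorem whcat_le_ocat {X : Type} [TopologicalSpace X] [NormalSpace X]
    (rX : X → X → Prop) (hX : Equivalence rX)
    (hpc : ∀ x : X, IsPathConnected {x' | rX x x'}) (A : Set X) :
    (∀ n : ℕ, OcatLe rX A n → WhcatLe rX A n) ∧ Whcat rX A ≤ Ocat rX A :=
  whcat_le_ocat_general rX hX A
end

section
/- Let (M, F_M) be a manifold with a C⁰-foliation and let A ⊆ M be a subset such that A ∩ L is at most countable for every leaf L. If U ⊆ M is open and H : U × [0,1] → M is a stratified (leafwise/tangential) homotopy with H(x,0) = x and H(x,1) ∈ A for all x, then H(-,1) is constant on each connected component of each set U ∩ L (L a leaf), i.e., U is tangentially categorical. -/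
/-!
The time-one map `H(-,1)` is continuous and sends a connected component of `U ∩ L` into the
countable set `A ∩ L`. A manifold is locally compact Hausdorff, hence T₃, and a countable T₃
space is totally disconnected (Urysohn functions take countably many values, so some level
set is missed and cuts out a clopen set). A connected image in it is a point.
-/

open unitInterval

-- Countable and regular gives Lindelöf, hence normal, hence completely regular.
theorem Set.Countable.isTotallyDisconnected_of_t3Space {X : Type*} [TopologicalSpace X]
    [T3Space X] {s : Set X} (hs : s.Countable) : IsTotallyDisconnected s := by
  have : Countable s := hs.to_subtype
  have : LindelofSpace s := isLindelof_iff_lindelofSpace.mp hs.isLindelof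
  have : NormalSpace s := NormalSpace.of_regularSpace_lindelofSpace
  rw [← totallyDisconnectedSpace_subtype_iff]
  infer_instance

theorem IsPreconnected.constant_of_mapsTo_countable {X Y : Type*} [TopologicalSpace X]
    [TopologicalSpace Y] [T3Space Y] {S : Set X} (hS : IsPreconnected S) {T : Set Y}
    (hT : T.Countable) {f : X → Y} (hf : ContinuousOn f S) (hfT : Set.MapsTo f S T) {x y : X}
    (hx : x ∈ S) (hy : y ∈ S) : f x = f y :=
  hT.isTotallyDisconnected_of_t3Space _ hfT.image_subset (hS.image f hf)
    (Set.mem_image_of_mem f hx) (Set.mem_image_of_mem f hy)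

section relInduced

variable {X : Type} [TopologicalSpace X] {rX : X → X → Prop} {U : Set X}

theorem relInduced_self_of_relInduced {x x' : U} (h : relInduced rX U x x') :
    relInduced rX U x x :=
  mem_connectedComponentIn (connectedComponentIn_nonempty_iff.mp ⟨_, h⟩)

theorem isPreconnected_setOf_relInduced (x : U) : IsPreconnected {y : U | relInduced rX U x y} := by
  have hsub : connectedComponentIn {y | y ∈ U ∧ rX x y} (x : X) ⊆ Set.range ((↑) : U → X) :=
    fun _ hy => Subtype.range_coe ▸ (connectedComponentIn_subset _ _ hy).1
  rw [← Topology.IsInducing.subtypeVal.isPreconnected_image]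
  exact Set.image_preimage_eq_of_subset hsub ▸ isPreconnected_connectedComponentIn

theorem IsStratHomotopy.rel_of_relInduced {H : U × I → X}
    (hH : IsStratHomotopy (relInduced rX U) rX H) (h0 : ∀ x : U, H (x, 0) = (x : X))
    {x y : U} (hxy : relInduced rX U x y) (t : I) : rX x (H (y, t)) :=
  h0 x ▸ hH.2 x y 0 t hxy

end relInduced

theorem tangentially_categorical_of_deformation_into_countable_transversal_general
    {n : ℕ} {M : Type} [TopologicalSpace M] [T2Space M]
    [ChartedSpace (EuclideanSpace ℝ (Fin n)) M]
    (rM : M → M → Prop)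
    (A : Set M) (hA : ∀ x : M, (A ∩ {y | rM x y}).Countable)
    (U : Set M) (H : U × I → M)
    (hH : IsStratHomotopy (relInduced rM U) rM H)
    (h0 : ∀ x : U, H (x, 0) = (x : M)) (h1 : ∀ x : U, H (x, 1) ∈ A) :
    ∀ x x' : U, relInduced rM U x x' → H (x, 1) = H (x', 1) := by
  intro x x' hxx'
  have : LocallyCompactSpace M := ChartedSpace.locallyCompactSpace (EuclideanSpace ℝ (Fin n)) M
  have hmaps : Set.MapsTo (fun y : U => H (y, 1)) {y | relInduced rM U x y} (A ∩ {z | rM x z}) :=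
    fun y hy => ⟨h1 y, hH.rel_of_relInduced h0 hy 1⟩
  exact (isPreconnected_setOf_relInduced x).constant_of_mapsTo_countable (hA x)
    (hH.1.comp (continuous_id.prodMk continuous_const)).continuousOn hmaps
    (relInduced_self_of_relInduced hxx') hxx'

/-- on a foliated manifold (a manifold stratified by path-connected
leaves), if `A` meets every leaf in an at most countable set and `H` is a stratified
homotopy on an open set `U` from the inclusion to a map with values in `A`, then the
time-one map `H(-,1)` is constant on each connected component of each `U ∩ L`, i.e. `U`
is tangentially categorical. -/
theorem tangentially_categorical_of_deformation_into_countable_transversal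
    {n : ℕ} {M : Type} [TopologicalSpace M] [T2Space M]
    [ChartedSpace (EuclideanSpace ℝ (Fin n)) M]
    (rM : M → M → Prop) (hM : Equivalence rM)
    (hpc : ∀ x : M, IsPathConnected {y | rM x y})
    (A : Set M) (hA : ∀ x : M, (A ∩ {y | rM x y}).Countable)
    (U : Set M) (hU : IsOpen U) (H : U × I → M)
    (hH : IsStratHomotopy (relInduced rM U) rM H)
    (h0 : ∀ x : U, H (x, 0) = (x : M)) (h1 : ∀ x : U, H (x, 1) ∈ A) :
    ∀ x x' : U, relInduced rM U x x' → H (x, 1) = H (x', 1) :=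
  tangentially_categorical_of_deformation_into_countable_transversal_general (n := n) rM A hA U H hH
    h0 h1
end
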